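/- arXiv:0906.2034 — 2 statements merged into one kernel-verified Lean document; each statement's English description precedes it below -/
import Mathlib

section
/- The Soft-Impute map is non-expansive in the successive-differences sense: for the iterates Z^{k+1} = S_λ(P_Ω(X) + P_Ω^⊥(Z^k)), one has ‖Z^{k+1} − Z^k‖_F² ≤ ‖P_Ω^⊥(Z^k − Z^{k−1})‖_F² ≤ ‖Z^k − Z^{k−1}‖_F² for all k ≥ 1. -/
open Matrix BigOperators Finset

noncomputable section

/-- Squared Frobenius norm of a real matrix. -/
def frobSq {m n : ℕ} (A : Matrix (Fin m) (Fin n) ℝ) : ℝ :=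
  ∑ i, ∑ j, (A i j) ^ 2

/-- Frobenius norm. -/
def frobNorm {m n : ℕ} (A : Matrix (Fin m) (Fin n) ℝ) : ℝ :=
  Real.sqrt (frobSq A)

/-- The singular values of `A`, as square roots of the eigenvalues of `Aᴴ * A`. -/
def singVals {m n : ℕ} (A : Matrix (Fin m) (Fin n) ℝ) : Fin n → ℝ :=
  fun i => Real.sqrt ((show (Aᵀ * A).IsHermitian by
    simpa using Matrix.isHermitian_conjTranspose_mul_self A).eigenvalues i)

/-- Nuclear norm: the sum of the singular values. -/
def nnorm {m n : ℕ} (A : Matrix (Fin m) (Fin n) ℝ) : ℝ :=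
  ∑ i, singVals A i

/-- Spectral norm: the largest singular value. -/
def specNorm {m n : ℕ} (A : Matrix (Fin m) (Fin n) ℝ) : ℝ :=
  ⨆ i, singVals A i

/-- Projection onto the observed entries `Ω`. -/
def pO {m n : ℕ} (Ω : Finset (Fin m × Fin n)) (Y : Matrix (Fin m) (Fin n) ℝ) :
    Matrix (Fin m) (Fin n) ℝ :=
  fun i j => if (i, j) ∈ Ω then Y i j else 0

/-- Complementary projection `P_Ω^⊥ = I - P_Ω`. -/
def pOc {m n : ℕ} (Ω : Finset (Fin m × Fin n)) (Y : Matrix (Fin m) (Fin n) ℝ) :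
    Matrix (Fin m) (Fin n) ℝ :=
  Y - pO Ω Y

/-- The objective `f_λ(Z) = ½‖P_Ω(Z) - P_Ω(X)‖_F² + λ‖Z‖_*`. -/
def fObj {m n : ℕ} (Ω : Finset (Fin m × Fin n)) (X : Matrix (Fin m) (Fin n) ℝ) (lam : ℝ)
    (Z : Matrix (Fin m) (Fin n) ℝ) : ℝ :=
  (1 / 2) * frobSq (pO Ω Z - pO Ω X) + lam * nnorm Z

/-- The surrogate `Q_λ(Z | Z̃) = ½‖P_Ω(X) + P_Ω^⊥(Z̃) - Z‖_F² + λ‖Z‖_*`. -/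
def qObj {m n : ℕ} (Ω : Finset (Fin m × Fin n)) (X : Matrix (Fin m) (Fin n) ℝ) (lam : ℝ)
    (Z Zt : Matrix (Fin m) (Fin n) ℝ) : ℝ :=
  (1 / 2) * frobSq (pO Ω X + pOc Ω Zt - Z) + lam * nnorm Z

/-- `IsSVD W U d V` : `W = U D Vᵀ` is a thin SVD of `W` with strictly positive
singular values `d` and orthonormal columns in `U` and `V`. -/
def IsSVD {m n r : ℕ} (W : Matrix (Fin m) (Fin n) ℝ) (U : Matrix (Fin m) (Fin r) ℝ)
    (d : Fin r → ℝ) (V : Matrix (Fin n) (Fin r) ℝ) : Prop :=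
  Uᵀ * U = 1 ∧ Vᵀ * V = 1 ∧ (∀ i, 0 < d i) ∧ W = U * Matrix.diagonal d * Vᵀ

/-- Trace inner product `⟨A, B⟩ = tr(AᵀB)`. -/
def minner {m n : ℕ} (A B : Matrix (Fin m) (Fin n) ℝ) : ℝ :=
  ∑ i, ∑ j, A i j * B i j

/-- `G` is a subgradient of the nuclear norm at `Z`. -/
def NucSubgrad {m n : ℕ} (Z G : Matrix (Fin m) (Fin n) ℝ) : Prop :=
  ∀ Y, nnorm Z + minner G (Y - Z) ≤ nnorm Y

end

/-!
Write `R = A - S_λ(A)` for the residual of soft-thresholding `A = U diag(d) Vᵀ`: it is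
`U diag(min d λ) Vᵀ`, so it shares its singular vectors with `S_λ(A)` and has spectral norm at
most `λ`. Hence `⟨S_λ(A), R_A⟩ = λ ‖S_λ(A)‖_*`, while for any other `B` the duality between
spectral and nuclear norms gives `⟨S_λ(A), R_B⟩ ≤ λ ‖S_λ(A)‖_*`. Adding the two symmetric
inequalities yields `⟨S_λ(A) - S_λ(B), R_A - R_B⟩ ≥ 0`, i.e. `S_λ` is firmly non-expansive:
`‖S_λ(A) - S_λ(B)‖² ≤ ⟨S_λ(A) - S_λ(B), A - B⟩ ≤ ‖S_λ(A) - S_λ(B)‖ ‖A - B‖`. Between two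
Soft-Impute steps the arguments differ by `P_Ω^⊥(Z^k - Z^{k-1})`, and `P_Ω^⊥` only deletes
entries.
-/

section TraceInner

variable {m n : ℕ}

lemma minner_comm (A B : Matrix (Fin m) (Fin n) ℝ) : minner A B = minner B A := by
  simp only [minner, mul_comm]

lemma minner_self (A : Matrix (Fin m) (Fin n) ℝ) : minner A A = frobSq A := by
  simp only [minner, frobSq, sq]

lemma minner_add_right (A B C : Matrix (Fin m) (Fin n) ℝ) :
    minner A (B + C) = minner A B + minner A C := by
  simp only [minner, Matrix.add_apply, mul_add, Finset.sum_add_distrib]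

lemma minner_sub_left (A B C : Matrix (Fin m) (Fin n) ℝ) :
    minner (A - B) C = minner A C - minner B C := by
  simp only [minner, Matrix.sub_apply, sub_mul, Finset.sum_sub_distrib]

lemma minner_sub_right (A B C : Matrix (Fin m) (Fin n) ℝ) :
    minner A (B - C) = minner A B - minner A C := by
  simp only [minner, Matrix.sub_apply, mul_sub, Finset.sum_sub_distrib]

lemma minner_le_half_frobSq_add (A B : Matrix (Fin m) (Fin n) ℝ) :
    minner A B ≤ (frobSq A + frobSq B) / 2 := by
  calc minner A B ≤ ∑ i, ∑ j, (A i j ^ 2 + B i j ^ 2) / 2 := by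
        unfold minner
        gcongr with i _ j _
        linarith [two_mul_le_add_sq (A i j) (B i j)]
    _ = (frobSq A + frobSq B) / 2 := by
        simp only [frobSq, add_div, Finset.sum_add_distrib, Finset.sum_div]

lemma frobSq_le_of_frobSq_le_minner {A B : Matrix (Fin m) (Fin n) ℝ}
    (h : frobSq A ≤ minner A B) : frobSq A ≤ frobSq B := by
  linarith [minner_le_half_frobSq_add A B]

lemma minner_eq_trace (A B : Matrix (Fin m) (Fin n) ℝ) : minner A B = trace (Aᵀ * B) := by
  simp only [minner, trace, Matrix.diag, mul_apply, transpose_apply]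
  exact Finset.sum_comm

end TraceInner

lemma sum_sq_transpose_mul_apply_le {m r k R : Type*} [Fintype m] [Fintype r] [DecidableEq r]
    [CommRing R] [LinearOrder R] [IsStrictOrderedRing R] {U : Matrix m r R} (hU : Uᵀ * U = 1)
    (M : Matrix m k R) (j : k) : ∑ i, (Uᵀ * M) i j ^ 2 ≤ (Mᵀ * M) j j := by
  set K := Uᵀ * M
  have hres : (M - U * K)ᵀ * (M - U * K) = Mᵀ * M - Kᵀ * K := by
    have hKt : Mᵀ * U = Kᵀ := by simp only [K, transpose_mul, transpose_transpose]
    simp only [transpose_sub, transpose_mul, Matrix.sub_mul, Matrix.mul_sub, ← Matrix.mul_assoc,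
      hKt]
    rw [Matrix.mul_assoc Kᵀ Uᵀ U, hU, Matrix.mul_one, Matrix.mul_assoc Kᵀ Uᵀ M]
    abel
  have hnonneg : 0 ≤ ((M - U * K)ᵀ * (M - U * K)) j j := by
    rw [mul_apply]
    exact Finset.sum_nonneg fun a _ => mul_self_nonneg _
  rw [hres, Matrix.sub_apply, sub_nonneg, mul_apply] at hnonneg
  simpa only [transpose_apply, sq] using hnonneg

section Factored

variable {m n r₁ r₂ : ℕ}

lemma minner_mul_diagonal_mul_transpose (U₁ : Matrix (Fin m) (Fin r₁) ℝ)
    (V₁ : Matrix (Fin n) (Fin r₁) ℝ) (U₂ : Matrix (Fin m) (Fin r₂) ℝ)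
    (V₂ : Matrix (Fin n) (Fin r₂) ℝ) (e : Fin r₁ → ℝ) (c : Fin r₂ → ℝ) :
    minner (U₁ * diagonal e * V₁ᵀ) (U₂ * diagonal c * V₂ᵀ)
      = ∑ i, ∑ j, e i * c j * (U₁ᵀ * U₂) i j * (V₁ᵀ * V₂) i j := by
  have hcycle : (U₁ * diagonal e * V₁ᵀ)ᵀ * (U₂ * diagonal c * V₂ᵀ)
      = V₁ * (diagonal e * (U₁ᵀ * U₂) * diagonal c * V₂ᵀ) := by
    simp only [transpose_mul, transpose_transpose, diagonal_transpose, Matrix.mul_assoc]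
  have hcore : diagonal e * (U₁ᵀ * U₂) * diagonal c * V₂ᵀ * V₁
      = diagonal e * (U₁ᵀ * U₂) * diagonal c * (V₁ᵀ * V₂)ᵀ := by
    simp only [transpose_mul, transpose_transpose, Matrix.mul_assoc]
  rw [minner_eq_trace, hcycle, trace_mul_comm, hcore]
  generalize U₁ᵀ * U₂ = P
  generalize V₁ᵀ * V₂ = Q
  refine Finset.sum_congr rfl fun i _ => ?_
  rw [Matrix.diag, mul_apply]
  simp only [mul_diagonal, diagonal_mul, transpose_apply]
  exact Finset.sum_congr rfl fun j _ => by ring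

lemma minner_mul_diagonal_mul_transpose_same {U : Matrix (Fin m) (Fin r₁) ℝ}
    {V : Matrix (Fin n) (Fin r₁) ℝ} (hU : Uᵀ * U = 1) (hV : Vᵀ * V = 1) (a b : Fin r₁ → ℝ) :
    minner (U * diagonal a * Vᵀ) (U * diagonal b * Vᵀ) = ∑ i, a i * b i := by
  simp [minner_mul_diagonal_mul_transpose, hU, hV, one_apply]

/-- Duality of spectral and nuclear norm: the left factor has spectral norm `≤ lam`, the right one
nuclear norm `∑ c`. -/
lemma minner_mul_diagonal_mul_transpose_le {lam : ℝ} (hlam : 0 ≤ lam)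
    {U₁ : Matrix (Fin m) (Fin r₁) ℝ} {V₁ : Matrix (Fin n) (Fin r₁) ℝ}
    {U₂ : Matrix (Fin m) (Fin r₂) ℝ} {V₂ : Matrix (Fin n) (Fin r₂) ℝ}
    (hU₁ : U₁ᵀ * U₁ = 1) (hV₁ : V₁ᵀ * V₁ = 1) (hU₂ : U₂ᵀ * U₂ = 1) (hV₂ : V₂ᵀ * V₂ = 1)
    {e : Fin r₁ → ℝ} {c : Fin r₂ → ℝ}
    (he : ∀ i, 0 ≤ e i) (helam : ∀ i, e i ≤ lam) (hc : ∀ j, 0 ≤ c j) :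
    minner (U₁ * diagonal e * V₁ᵀ) (U₂ * diagonal c * V₂ᵀ) ≤ lam * ∑ j, c j := by
  rw [minner_mul_diagonal_mul_transpose, Finset.sum_comm, Finset.mul_sum]
  refine Finset.sum_le_sum fun j _ => ?_
  set P := U₁ᵀ * U₂
  set Q := V₁ᵀ * V₂
  have hP : ∑ i, P i j ^ 2 ≤ 1 := by
    simpa [hU₂] using sum_sq_transpose_mul_apply_le hU₁ U₂ j
  have hQ : ∑ i, Q i j ^ 2 ≤ 1 := by
    simpa [hV₂] using sum_sq_transpose_mul_apply_le hV₁ V₂ j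
  have hterm : ∀ i, e i * (P i j * Q i j) ≤ lam * ((P i j ^ 2 + Q i j ^ 2) / 2) := fun i =>
    calc e i * (P i j * Q i j) ≤ e i * ((P i j ^ 2 + Q i j ^ 2) / 2) :=
          mul_le_mul_of_nonneg_left (by linarith [two_mul_le_add_sq (P i j) (Q i j)]) (he i)
      _ ≤ lam * ((P i j ^ 2 + Q i j ^ 2) / 2) :=
          mul_le_mul_of_nonneg_right (helam i) (by positivity)
  calc ∑ i, e i * c j * P i j * Q i j = c j * ∑ i, e i * (P i j * Q i j) := by
        rw [Finset.mul_sum]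
        exact Finset.sum_congr rfl fun i _ => by ring
    _ ≤ c j * ∑ i, lam * ((P i j ^ 2 + Q i j ^ 2) / 2) :=
        mul_le_mul_of_nonneg_left (Finset.sum_le_sum fun i _ => hterm i) (hc j)
    _ = c j * (lam * ((∑ i, P i j ^ 2 + ∑ i, Q i j ^ 2) / 2)) := by
        rw [← Finset.mul_sum, ← Finset.sum_div, Finset.sum_add_distrib]
    _ ≤ c j * (lam * 1) := by
        have := hc j
        gcongr
        linarith
    _ = lam * c j := by ring

end Factored

lemma sub_max_sub_zero (x lam : ℝ) : x - max (x - lam) 0 = min x lam := by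
  rcases le_total x lam with h | h
  · rw [max_eq_right (by linarith), min_eq_left h, sub_zero]
  · rw [max_eq_left (by linarith), min_eq_right h]
    ring

lemma max_sub_zero_mul_min (x lam : ℝ) : max (x - lam) 0 * min x lam = lam * max (x - lam) 0 := by
  rcases le_total x lam with h | h
  · rw [max_eq_right (by linarith), zero_mul, mul_zero]
  · rw [min_eq_right h, mul_comm]

/-- `S` is the singular-value soft-thresholding `S_λ(A)`, computed from some thin SVD of `A`. -/
def IsSoftThreshold {m n : ℕ} (lam : ℝ) (A S : Matrix (Fin m) (Fin n) ℝ) : Prop :=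
  ∃ (r : ℕ) (U : Matrix (Fin m) (Fin r) ℝ) (d : Fin r → ℝ) (V : Matrix (Fin n) (Fin r) ℝ),
    IsSVD A U d V ∧ S = U * diagonal (fun i => max (d i - lam) 0) * Vᵀ

namespace IsSoftThreshold

variable {m n : ℕ} {lam : ℝ} {A B SA SB : Matrix (Fin m) (Fin n) ℝ}

lemma minner_sub_le (hlam : 0 ≤ lam) (hA : IsSoftThreshold lam A SA)
    (hB : IsSoftThreshold lam B SB) : minner SA (B - SB) ≤ minner SA (A - SA) := by
  obtain ⟨r, U, d, V, ⟨hU, hV, -, rfl⟩, rfl⟩ := hA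
  obtain ⟨r', U', d', V', ⟨hU', hV', hd', rfl⟩, rfl⟩ := hB
  simp only [← Matrix.sub_mul, ← Matrix.mul_sub, diagonal_sub, sub_max_sub_zero]
  rw [minner_comm, minner_mul_diagonal_mul_transpose_same hU hV]
  simp only [max_sub_zero_mul_min, ← Finset.mul_sum]
  exact minner_mul_diagonal_mul_transpose_le hlam hU' hV' hU hV
    (fun i => le_min (hd' i).le hlam) (fun i => min_le_right _ _) (fun i => le_max_right _ _)

lemma frobSq_sub_le_minner (hlam : 0 ≤ lam) (hA : IsSoftThreshold lam A SA)
    (hB : IsSoftThreshold lam B SB) : frobSq (SA - SB) ≤ minner (SA - SB) (A - B) := by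
  have hresidual : 0 ≤ minner (SA - SB) ((A - SA) - (B - SB)) := by
    have hAB := hA.minner_sub_le hlam hB
    have hBA := hB.minner_sub_le hlam hA
    rw [minner_sub_left, minner_sub_right SA, minner_sub_right SB]
    linarith
  have hsplit : A - B = (SA - SB) + ((A - SA) - (B - SB)) := by abel
  rw [hsplit, minner_add_right, minner_self]
  linarith

lemma frobSq_sub_le (hlam : 0 ≤ lam) (hA : IsSoftThreshold lam A SA)
    (hB : IsSoftThreshold lam B SB) : frobSq (SA - SB) ≤ frobSq (A - B) :=
  frobSq_le_of_frobSq_le_minner (hA.frobSq_sub_le_minner hlam hB)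

end IsSoftThreshold

lemma pOc_sub {m n : ℕ} (Ω : Finset (Fin m × Fin n)) (Y W : Matrix (Fin m) (Fin n) ℝ) :
    pOc Ω (Y - W) = pOc Ω Y - pOc Ω W := by
  ext i j
  simp only [pOc, pO, Matrix.sub_apply]
  split_ifs <;> ring

lemma frobSq_pOc_le {m n : ℕ} (Ω : Finset (Fin m × Fin n)) (W : Matrix (Fin m) (Fin n) ℝ) :
    frobSq (pOc Ω W) ≤ frobSq W := by
  refine Finset.sum_le_sum fun i _ => Finset.sum_le_sum fun j _ => ?_
  simp only [pOc, pO, Matrix.sub_apply]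
  split_ifs
  · rw [sub_self, sq, zero_mul]
    exact sq_nonneg _
  · rw [sub_zero]

/-- the Soft-Impute map is non-expansive in the
successive-differences sense. -/
theorem soft_impute_successive_differences {m n : ℕ} (Ω : Finset (Fin m × Fin n))
    (X : Matrix (Fin m) (Fin n) ℝ) (lam : ℝ) (hlam : 0 ≤ lam)
    (Z : ℕ → Matrix (Fin m) (Fin n) ℝ)
    (hiter : ∀ k, ∃ (r : ℕ) (U : Matrix (Fin m) (Fin r) ℝ) (d : Fin r → ℝ)
        (V : Matrix (Fin n) (Fin r) ℝ),
      IsSVD (pO Ω X + pOc Ω (Z k)) U d V ∧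
      Z (k + 1) = U * Matrix.diagonal (fun i => max (d i - lam) 0) * Vᵀ) :
    ∀ k : ℕ, 1 ≤ k →
      frobSq (Z (k + 1) - Z k) ≤ frobSq (pOc Ω (Z k - Z (k - 1))) ∧
      frobSq (pOc Ω (Z k - Z (k - 1))) ≤ frobSq (Z k - Z (k - 1)) := by
  have hstep : ∀ k, IsSoftThreshold lam (pO Ω X + pOc Ω (Z k)) (Z (k + 1)) := hiter
  intro k hk
  obtain ⟨k, rfl⟩ : ∃ j, k = j + 1 := ⟨k - 1, by omega⟩
  rw [Nat.add_sub_cancel]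
  have hdiff : (pO Ω X + pOc Ω (Z (k + 1))) - (pO Ω X + pOc Ω (Z k))
      = pOc Ω (Z (k + 1) - Z k) := by
    rw [pOc_sub]
    abel
  refine ⟨?_, frobSq_pOc_le Ω _⟩
  rw [← hdiff]
  exact (hstep (k + 1)).frobSq_sub_le hlam (hstep k)
end

section
/- Convergence of Soft-Impute: for λ > 0, the sequence Z^0 = 0, Z^{k+1} = S_λ(P_Ω(X) + P_Ω^⊥(Z^k)) converges to a matrix Z∞ that minimizes f_λ(Z) = (1/2)‖P_Ω(Z) − P_Ω(X)‖_F² + λ‖Z‖_* over all m×n matrices Z. -/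
open Matrix BigOperators Finset

/-!
Soft-Impute is a majorize–minimize scheme. The surrogate `Q_λ(· | Z̃)` majorizes `f_λ` with
equality at `Z̃`, and `S_λ(P_Ω X + P_Ω^⊥ Z̃)` is its exact minimizer: soft-thresholding is the
proximal map of `λ‖·‖_*`, because `⟨U diag(g) Vᵀ, Y⟩ ≤ λ‖Y‖_*` whenever `0 ≤ g ≤ λ` (read off an
SVD of `Y`). Strong convexity of `Q_λ(· | Z̃)` gives the sufficient decrease
`f_λ(Z^{k+1}) + ½‖Z^k - Z^{k+1}‖² ≤ f_λ(Z^k)`, hence bounded iterates (as `‖Z‖_F ≤ ‖Z‖_*`) and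
`‖Z^k - Z^{k+1}‖ → 0`. The iteration map, a proximal map after a projection, is nonexpansive, so
a cluster point is a fixed point, the distance to it never increases, and the whole sequence
converges to it. Its limit `Z∞` minimizes `Q_λ(· | Z∞)` with margin `½‖· - Z∞‖²`, while
`Q_λ(· | Z∞) ≤ f_λ + ½‖· - Z∞‖²`; the margins cancel, so `Z∞` minimizes `f_λ`.
-/

open Filter Topology Function

theorem tendsto_dist_succ_of_descent {X : Type*} [PseudoMetricSpace X] {f : X → ℝ} {z : ℕ → X}
    (hf : ∀ k, 0 ≤ f (z k))
    (hdesc : ∀ k, f (z (k + 1)) + dist (z k) (z (k + 1)) ^ 2 / 2 ≤ f (z k)) :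
    Tendsto (fun k => dist (z k) (z (k + 1))) atTop (𝓝 0) := by
  have hsum : Summable fun k => dist (z k) (z (k + 1)) ^ 2 / 2 := by
    refine summable_of_sum_range_le (c := f (z 0)) (fun k => by positivity) fun N => ?_
    have htel := Finset.sum_range_sub' (fun k => f (z k)) N
    have := Finset.sum_le_sum fun k (_ : k ∈ Finset.range N) => le_sub_iff_add_le'.mpr (hdesc k)
    linarith [hf N]
  have hsqrt := (Real.continuous_sqrt.tendsto _).comp (hsum.tendsto_atTop_zero.const_mul 2)
  rw [mul_zero, Real.sqrt_zero] at hsqrt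
  refine hsqrt.congr fun k => ?_
  rw [Function.comp_apply, mul_div_cancel₀ _ two_ne_zero, Real.sqrt_sq dist_nonneg]

theorem LipschitzWith.exists_isFixedPt_tendsto {X : Type*} [MetricSpace X] [ProperSpace X]
    {T : X → X} (hT : LipschitzWith 1 T) {z : ℕ → X} (hz : ∀ k, z (k + 1) = T (z k))
    (hbdd : Bornology.IsBounded (Set.range z))
    (hreg : Tendsto (fun k => dist (z k) (z (k + 1))) atTop (𝓝 0)) :
    ∃ a, IsFixedPt T a ∧ Tendsto z atTop (𝓝 a) := by
  obtain ⟨a, -, φ, hφ, hza⟩ := tendsto_subseq_of_bounded hbdd (Set.mem_range_self ·)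
  have hfix : IsFixedPt T a := by
    have hshift : Tendsto (fun k => z (φ k + 1)) atTop (𝓝 a) :=
      hza.congr_dist (hreg.comp hφ.tendsto_atTop)
    simp only [hz] at hshift
    exact tendsto_nhds_unique ((hT.continuous.tendsto a).comp hza) hshift
  have hanti : Antitone fun k => dist (z k) a := antitone_nat_of_succ_le fun k => by
    simpa only [hz, hfix.eq, NNReal.coe_one, one_mul] using hT.dist_le_mul (z k) a
  have hinf := tendsto_atTop_ciInf hanti ⟨0, Set.forall_mem_range.mpr fun k => dist_nonneg⟩
  have hzero : ⨅ k, dist (z k) a = 0 :=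
    tendsto_nhds_unique (hinf.comp hφ.tendsto_atTop) (tendsto_iff_dist_tendsto_zero.mp hza)
  exact ⟨a, hfix, tendsto_iff_dist_tendsto_zero.mpr (hzero ▸ hinf)⟩

theorem Finset.sum_mul_mul_le_of_sum_sq_le_one {ι : Type*} (s : Finset ι) {g P Q : ι → ℝ}
    {lam : ℝ} (hlam : 0 ≤ lam) (hg₀ : ∀ i, 0 ≤ g i) (hg : ∀ i, g i ≤ lam)
    (hP : ∑ i ∈ s, P i ^ 2 ≤ 1) (hQ : ∑ i ∈ s, Q i ^ 2 ≤ 1) :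
    ∑ i ∈ s, g i * P i * Q i ≤ lam := by
  have hPQ : ∑ i ∈ s, |P i| * |Q i| ≤ 1 := by
    calc ∑ i ∈ s, |P i| * |Q i| ≤ √(∑ i ∈ s, |P i| ^ 2) * √(∑ i ∈ s, |Q i| ^ 2) :=
          Real.sum_mul_le_sqrt_mul_sqrt s _ _
      _ ≤ 1 * 1 := by
          simp only [sq_abs]
          gcongr <;> exact Real.sqrt_le_one.mpr ‹_›
      _ = 1 := one_mul 1
  calc ∑ i ∈ s, g i * P i * Q i ≤ ∑ i ∈ s, lam * (|P i| * |Q i|) := by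
        refine sum_le_sum fun i _ => ?_
        have hPQi : P i * Q i ≤ |P i| * |Q i| := abs_mul (P i) (Q i) ▸ le_abs_self _
        calc g i * P i * Q i = g i * (P i * Q i) := mul_assoc _ _ _
          _ ≤ g i * (|P i| * |Q i|) := mul_le_mul_of_nonneg_left hPQi (hg₀ i)
          _ ≤ lam * (|P i| * |Q i|) := mul_le_mul_of_nonneg_right (hg i) (by positivity)
    _ ≤ lam := by rw [← mul_sum]; exact mul_le_of_le_one_right hlam hPQ

namespace Matrix

open scoped MatrixOrder

variable {ι κ m n : Type*} [Fintype ι] [Fintype n] [DecidableEq n]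

theorem mul_diagonal_mul_transpose_apply {α : Type*} [NonUnitalNonAssocSemiring α]
    (U : Matrix m n α) (d : n → α) (V : Matrix κ n α) (i : m) (j : κ) :
    (U * diagonal d * Vᵀ) i j = ∑ p, U i p * d p * V j p := by
  rw [mul_apply]; simp only [mul_diagonal, transpose_apply]

theorem PosSemidef.exists_eq_mul_diagonal_mul_transpose {M : Matrix n n ℝ} (hM : M.PosSemidef) :
    ∃ (r : ℕ) (V : Matrix n (Fin r) ℝ) (μ : Fin r → ℝ),
      Vᵀ * V = 1 ∧ (∀ j, 0 < μ j) ∧ M = V * diagonal μ * Vᵀ := by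
  set Q : Matrix n n ℝ := (hM.1.eigenvectorUnitary : Matrix n n ℝ)
  set μ := hM.1.eigenvalues
  have hQ : Qᵀ * Q = 1 := by
    simpa [star_eq_conjTranspose] using Unitary.coe_star_mul_self hM.1.eigenvectorUnitary
  have hspec : M = Q * diagonal μ * Qᵀ := by
    simpa [Unitary.conjStarAlgAut_apply, star_eq_conjTranspose] using hM.1.spectral_theorem
  -- Keep the eigenvectors with positive eigenvalue; the others have eigenvalue `0`.
  set e := Fintype.equivFin {i // 0 < μ i}
  set emb : Fin (Fintype.card {i // 0 < μ i}) → n := fun j => (e.symm j).1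
  have hemb : Injective emb := fun j k h => e.symm.injective (Subtype.ext h)
  refine ⟨_, Q.submatrix id emb, μ ∘ emb, ?_, fun j => (e.symm j).2, ?_⟩
  · rw [transpose_submatrix, ← submatrix_mul _ _ _ _ _ bijective_id, hQ, submatrix_one _ hemb]
  · ext a b
    rw [hspec, mul_diagonal_mul_transpose_apply, mul_diagonal_mul_transpose_apply,
      ← Finset.sum_filter_of_ne (p := fun i => 0 < μ i),
      Finset.sum_subtype _ (fun i => Finset.mem_filter_univ _), ← e.symm.sum_comp]
    · rfl
    · intro i _ hi
      exact (hM.eigenvalues_nonneg i).lt_of_ne' fun h0 => hi (by simp [μ, h0])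

theorem PosSemidef.trace_cfcSqrt {M : Matrix n n ℝ} (hM : M.PosSemidef) :
    (CFC.sqrt M).trace = ∑ i, √(hM.1.eigenvalues i) := by
  rw [CFC.sqrt_eq_cfc, cfc_nnreal_eq_real _ M hM.nonneg, hM.1.cfc_eq, IsHermitian.cfc,
    Unitary.conjStarAlgAut_apply, trace_mul_cycle, Unitary.coe_star_mul_self, Matrix.one_mul,
    trace_diagonal]
  refine Finset.sum_congr rfl fun i _ => ?_
  simp [Real.coe_sqrt, Real.coe_toNNReal', max_eq_left (hM.eigenvalues_nonneg i)]

theorem cfcSqrt_mul_diagonal_mul_transpose [DecidableEq ι] {V : Matrix n ι ℝ} (hV : Vᵀ * V = 1)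
    {d : ι → ℝ} (hd : 0 ≤ d) :
    CFC.sqrt (V * diagonal (d * d) * Vᵀ) = V * diagonal d * Vᵀ := by
  refine CFC.sqrt_unique ?_ ?_
  · simp only [Matrix.mul_assoc]
    rw [← Matrix.mul_assoc Vᵀ, hV, Matrix.one_mul, ← Matrix.mul_assoc (diagonal d),
      diagonal_mul_diagonal]
    rfl
  · simpa using ((PosSemidef.diagonal hd).mul_mul_conjTranspose_same V).nonneg

theorem sum_sq_transpose_mul_apply_le_one [Fintype m] [DecidableEq ι] [DecidableEq κ]
    {U : Matrix m ι ℝ} (hU : Uᵀ * U = 1) {A : Matrix m κ ℝ} (hA : Aᵀ * A = 1) (j : κ) :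
    ∑ i, (Uᵀ * A) i j ^ 2 ≤ 1 := by
  set B := Uᵀ * A
  have hgram : Bᵀ * B + (A - U * B)ᵀ * (A - U * B) = Aᵀ * A := by
    have hUB : (U * B)ᵀ * A = Bᵀ * B := by rw [transpose_mul, Matrix.mul_assoc]
    have hBU : Aᵀ * (U * B) = Bᵀ * B := by
      rw [← Matrix.mul_assoc, transpose_mul, transpose_transpose]
    have hUU : (U * B)ᵀ * (U * B) = Bᵀ * B := by
      rw [transpose_mul, Matrix.mul_assoc, ← Matrix.mul_assoc Uᵀ, hU, Matrix.one_mul]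
    rw [transpose_sub, Matrix.sub_mul, Matrix.mul_sub, Matrix.mul_sub, hUB, hBU, hUU]
    abel
  have hjj := congrFun (congrFun hgram j) j
  rw [hA, one_apply_eq, Matrix.add_apply] at hjj
  have hB : (Bᵀ * B) j j = ∑ i, B i j ^ 2 := by simp only [mul_apply, transpose_apply, sq]
  have hC : 0 ≤ ((A - U * B)ᵀ * (A - U * B)) j j := by
    simp only [mul_apply, transpose_apply]
    exact Finset.sum_nonneg fun i _ => mul_self_nonneg _
  linarith

end Matrix

namespace SoftImpute

open scoped MatrixOrder

-- The Frobenius norm, whose topology is definitionally the product topology on matrices.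
attribute [local instance] Matrix.frobeniusNormedAddCommGroup Matrix.frobeniusNormedSpace

variable {m n r : ℕ}

theorem norm_eq_sqrt_frobSq (A : Matrix (Fin m) (Fin n) ℝ) : ‖A‖ = √(frobSq A) := by
  rw [frobenius_norm_def, Real.sqrt_eq_rpow, frobSq]
  simp

theorem frobSq_eq_norm_sq (A : Matrix (Fin m) (Fin n) ℝ) : frobSq A = ‖A‖ ^ 2 := by
  rw [norm_eq_sqrt_frobSq, Real.sq_sqrt]
  exact sum_nonneg fun i _ => sum_nonneg fun j _ => sq_nonneg _

theorem minner_self (A : Matrix (Fin m) (Fin n) ℝ) : minner A A = ‖A‖ ^ 2 := by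
  rw [← frobSq_eq_norm_sq, minner, frobSq]
  simp only [sq]

theorem minner_sub_right (A B C : Matrix (Fin m) (Fin n) ℝ) :
    minner A (B - C) = minner A B - minner A C := by
  simp only [minner, Matrix.sub_apply, mul_sub, sum_sub_distrib]

theorem minner_le_norm_mul_norm (A B : Matrix (Fin m) (Fin n) ℝ) : minner A B ≤ ‖A‖ * ‖B‖ := by
  simpa only [minner, norm_eq_sqrt_frobSq, frobSq, Fintype.sum_prod_type] using
    Real.sum_mul_le_sqrt_mul_sqrt univ (fun p : Fin m × Fin n => A p.1 p.2) (fun p => B p.1 p.2)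

theorem norm_sub_sq_eq_minner (A B : Matrix (Fin m) (Fin n) ℝ) :
    ‖A - B‖ ^ 2 = ‖A‖ ^ 2 - 2 * minner A B + ‖B‖ ^ 2 := by
  simp only [← frobSq_eq_norm_sq, frobSq, minner, Matrix.sub_apply, mul_sum, ← sum_sub_distrib,
    ← sum_add_distrib]
  exact sum_congr rfl fun i _ => sum_congr rfl fun j _ => by ring

theorem norm_sub_sq_add_norm_sub_sq (W W' S S' : Matrix (Fin m) (Fin n) ℝ) :
    ‖W - S'‖ ^ 2 + ‖W' - S‖ ^ 2 = ‖W - S‖ ^ 2 + ‖W' - S'‖ ^ 2 + 2 * minner (W - W') (S - S') := by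
  simp only [← frobSq_eq_norm_sq, frobSq, minner, Matrix.sub_apply, mul_sum, ← sum_add_distrib]
  exact sum_congr rfl fun i _ => sum_congr rfl fun j _ => by ring

theorem minner_eq_trace (X Y : Matrix (Fin m) (Fin n) ℝ) : minner X Y = (Xᵀ * Y).trace := by
  simp only [minner, trace, Matrix.diag, mul_apply, transpose_apply]
  exact sum_comm

theorem minner_mul_diagonal_mul_transpose {k : ℕ} (U : Matrix (Fin m) (Fin r) ℝ)
    (g : Fin r → ℝ) (V : Matrix (Fin n) (Fin r) ℝ) (A : Matrix (Fin m) (Fin k) ℝ)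
    (σ : Fin k → ℝ) (B : Matrix (Fin n) (Fin k) ℝ) :
    minner (U * diagonal g * Vᵀ) (A * diagonal σ * Bᵀ) =
      ∑ q, σ q * ∑ p, g p * (Uᵀ * A) p q * (Vᵀ * B) p q := by
  calc minner (U * diagonal g * Vᵀ) (A * diagonal σ * Bᵀ)
      = (V * diagonal g * Uᵀ * A * (diagonal σ * Bᵀ)).trace := by
        simp only [minner_eq_trace, transpose_mul, transpose_transpose, diagonal_transpose,
          Matrix.mul_assoc]
    _ = (diagonal σ * (Bᵀ * V * diagonal g * (Uᵀ * A))).trace := by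
        rw [trace_mul_comm]
        simp only [Matrix.mul_assoc]
    _ = ∑ q, σ q * ∑ p, g p * (Uᵀ * A) p q * (Vᵀ * B) p q := by
        simp only [trace, Matrix.diag, diagonal_mul]
        refine sum_congr rfl fun q _ => congrArg (σ q * ·) ?_
        rw [mul_apply]
        refine sum_congr rfl fun p _ => ?_
        rw [mul_diagonal, ← transpose_apply (Vᵀ * B), transpose_mul, transpose_transpose]
        ring

theorem minner_mul_diagonal_mul_transpose_same {U : Matrix (Fin m) (Fin r) ℝ}
    {V : Matrix (Fin n) (Fin r) ℝ} (hU : Uᵀ * U = 1) (hV : Vᵀ * V = 1) (a b : Fin r → ℝ) :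
    minner (U * diagonal a * Vᵀ) (U * diagonal b * Vᵀ) = ∑ i, a i * b i := by
  simp [minner_mul_diagonal_mul_transpose, hU, hV, one_apply, mul_comm]

/-- `S` minimizes `½‖W - ·‖² + φ`, in the form with the quadratic margin `½‖Y - S‖²` that strong
convexity provides; for convex `φ` this is equivalent to minimality. -/
def IsProx (φ : Matrix (Fin m) (Fin n) ℝ → ℝ) (W S : Matrix (Fin m) (Fin n) ℝ) : Prop :=
  ∀ Y, ‖W - S‖ ^ 2 / 2 + φ S + ‖Y - S‖ ^ 2 / 2 ≤ ‖W - Y‖ ^ 2 / 2 + φ Y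

open Classical in
noncomputable def prox (φ : Matrix (Fin m) (Fin n) ℝ → ℝ) (W : Matrix (Fin m) (Fin n) ℝ) :
    Matrix (Fin m) (Fin n) ℝ :=
  if h : ∃ S, IsProx φ W S then h.choose else W

section Prox

variable {φ : Matrix (Fin m) (Fin n) ℝ → ℝ} {W W' S S' : Matrix (Fin m) (Fin n) ℝ}

theorem IsProx.of_subgradient (h : ∀ Y, φ S + minner (W - S) (Y - S) ≤ φ Y) : IsProx φ W S :=
  fun Y => by
    have := norm_sub_sq_eq_minner (W - S) (Y - S)
    rw [sub_sub_sub_cancel_right] at this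
    linarith [h Y]

theorem IsProx.norm_sub_le (h : IsProx φ W S) (h' : IsProx φ W' S') : ‖S - S'‖ ≤ ‖W - W'‖ := by
  have key : ‖S - S'‖ ^ 2 ≤ minner (W - W') (S - S') := by
    have hSS' : ‖S' - S‖ ^ 2 = ‖S - S'‖ ^ 2 := by rw [norm_sub_rev]
    linarith [h S', h' S, norm_sub_sq_add_norm_sub_sq W W' S S']
  have hcs := minner_le_norm_mul_norm (W - W') (S - S')
  nlinarith [norm_nonneg (S - S'), norm_nonneg (W - W')]

theorem IsProx.prox_eq (h : IsProx φ W S) : prox φ W = S := by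
  have hex : ∃ S, IsProx φ W S := ⟨S, h⟩
  rw [prox, dif_pos hex]
  simpa [sub_eq_zero] using hex.choose_spec.norm_sub_le h

theorem isProx_prox (h : ∃ S, IsProx φ W S) : IsProx φ W (prox φ W) := by
  rw [prox, dif_pos h]
  exact h.choose_spec

theorem lipschitzWith_prox (h : ∀ W, ∃ S, IsProx φ W S) : LipschitzWith 1 (prox φ) := by
  refine LipschitzWith.of_dist_le_mul fun W W' => ?_
  obtain ⟨⟨S, hS⟩, ⟨S', hS'⟩⟩ := And.intro (h W) (h W')
  rw [hS.prox_eq, hS'.prox_eq, NNReal.coe_one, one_mul, dist_eq_norm, dist_eq_norm]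
  exact hS.norm_sub_le hS'

end Prox

theorem nnorm_eq_trace_cfcSqrt (A : Matrix (Fin m) (Fin n) ℝ) :
    nnorm A = (CFC.sqrt (Aᵀ * A)).trace := by
  rw [PosSemidef.trace_cfcSqrt (by simpa using posSemidef_conjTranspose_mul_self A)]
  rfl

theorem nnorm_mul_diagonal_mul_transpose {U : Matrix (Fin m) (Fin r) ℝ}
    {V : Matrix (Fin n) (Fin r) ℝ} (hU : Uᵀ * U = 1) (hV : Vᵀ * V = 1) {d : Fin r → ℝ}
    (hd : 0 ≤ d) : nnorm (U * diagonal d * Vᵀ) = ∑ i, d i := by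
  have hgram : (U * diagonal d * Vᵀ)ᵀ * (U * diagonal d * Vᵀ) = V * diagonal (d * d) * Vᵀ := by
    simp only [transpose_mul, transpose_transpose, diagonal_transpose, Matrix.mul_assoc]
    rw [← Matrix.mul_assoc Uᵀ, hU, Matrix.one_mul, ← Matrix.mul_assoc (diagonal d),
      diagonal_mul_diagonal]
    rfl
  rw [nnorm_eq_trace_cfcSqrt, hgram, cfcSqrt_mul_diagonal_mul_transpose hV hd, trace_mul_cycle,
    hV, Matrix.one_mul, trace_diagonal]

theorem exists_svd (W : Matrix (Fin m) (Fin n) ℝ) :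
    ∃ (r : ℕ) (U : Matrix (Fin m) (Fin r) ℝ) (d : Fin r → ℝ) (V : Matrix (Fin n) (Fin r) ℝ),
      IsSVD W U d V := by
  obtain ⟨r, V, μ, hV, hμ, hWV⟩ := PosSemidef.exists_eq_mul_diagonal_mul_transpose
    (by simpa using posSemidef_conjTranspose_mul_self W)
  set d : Fin r → ℝ := fun j => √(μ j)
  have hd : ∀ j, 0 < d j := fun j => Real.sqrt_pos.mpr (hμ j)
  have hVV : ∀ {k : ℕ} (B : Matrix (Fin r) (Fin k) ℝ), Vᵀ * (V * B) = B := fun B => by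
    rw [← Matrix.mul_assoc, hV, Matrix.one_mul]
  refine ⟨r, W * V * diagonal d⁻¹, d, V, ?_, hV, hd, ?_⟩
  · calc (W * V * diagonal d⁻¹)ᵀ * (W * V * diagonal d⁻¹)
        = diagonal d⁻¹ * (Vᵀ * (Wᵀ * W) * V) * diagonal d⁻¹ := by
          simp only [transpose_mul, diagonal_transpose, Matrix.mul_assoc]
      _ = diagonal (fun j => (d j)⁻¹ * (μ j * (d j)⁻¹)) := by
          simp only [hWV, Matrix.mul_assoc, hVV, diagonal_mul_diagonal, Pi.inv_apply]
      _ = 1 := by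
          rw [← diagonal_one]
          congr 1
          funext j
          have := Real.sq_sqrt (hμ j).le
          field_simp [(hd j).ne']
          exact this.symm
  · -- `W (1 - V Vᵀ)` vanishes because its Gram matrix `(1 - V Vᵀ) Wᵀ W (1 - V Vᵀ)` does.
    have hker : Wᵀ * W * (1 - V * Vᵀ) = 0 := by
      rw [Matrix.mul_sub, Matrix.mul_one, hWV]
      simp only [Matrix.mul_assoc, hVV, sub_self]
    have hR : W * (1 - V * Vᵀ) = 0 := by
      rw [← conjTranspose_mul_self_eq_zero, conjTranspose_eq_transpose_of_trivial, transpose_mul,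
        Matrix.mul_assoc, ← Matrix.mul_assoc Wᵀ, hker, Matrix.mul_zero]
    have hdd : (fun j => (d j)⁻¹ * d j) = fun _ => 1 := funext fun j => inv_mul_cancel₀ (hd j).ne'
    calc W = W * (V * Vᵀ) := by rw [← sub_eq_zero, ← hR, Matrix.mul_sub, Matrix.mul_one]
      _ = W * V * diagonal d⁻¹ * diagonal d * Vᵀ := by
          simp only [Matrix.mul_assoc, diagonal_mul_diagonal, Pi.inv_apply, hdd, diagonal_one,
            Matrix.one_mul]

theorem norm_le_nnorm (Y : Matrix (Fin m) (Fin n) ℝ) : ‖Y‖ ≤ nnorm Y := by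
  obtain ⟨k, A, σ, B, hA, hB, hσ, rfl⟩ := exists_svd Y
  have hσ₀ : 0 ≤ σ := fun q => (hσ q).le
  rw [nnorm_mul_diagonal_mul_transpose hA hB hσ₀, ← pow_le_pow_iff_left₀ (norm_nonneg _)
    (sum_nonneg fun q _ => hσ₀ q) two_ne_zero, ← minner_self,
    minner_mul_diagonal_mul_transpose_same hA hB]
  simpa only [sq] using sum_sq_le_sq_sum_of_nonneg fun q _ => hσ₀ q

/-- Trace duality: `U diag(g) Vᵀ` has operator norm at most `λ`. -/
theorem minner_le_mul_nnorm {U : Matrix (Fin m) (Fin r) ℝ} {V : Matrix (Fin n) (Fin r) ℝ}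
    (hU : Uᵀ * U = 1) (hV : Vᵀ * V = 1) {g : Fin r → ℝ} {lam : ℝ} (hlam : 0 ≤ lam)
    (hg₀ : ∀ i, 0 ≤ g i) (hg : ∀ i, g i ≤ lam) (Y : Matrix (Fin m) (Fin n) ℝ) :
    minner (U * diagonal g * Vᵀ) Y ≤ lam * nnorm Y := by
  obtain ⟨k, A, σ, B, hA, hB, hσ, rfl⟩ := exists_svd Y
  rw [minner_mul_diagonal_mul_transpose, nnorm_mul_diagonal_mul_transpose hA hB fun q => (hσ q).le,
    mul_sum]
  refine sum_le_sum fun q _ => ?_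
  rw [mul_comm lam]
  exact mul_le_mul_of_nonneg_left (sum_mul_mul_le_of_sum_sq_le_one _ hlam hg₀ hg
    (sum_sq_transpose_mul_apply_le_one hU hA q) (sum_sq_transpose_mul_apply_le_one hV hB q))
    (hσ q).le

theorem isProx_softThreshold {lam : ℝ} (hlam : 0 < lam) {W : Matrix (Fin m) (Fin n) ℝ}
    {U : Matrix (Fin m) (Fin r) ℝ} {d : Fin r → ℝ} {V : Matrix (Fin n) (Fin r) ℝ}
    (h : IsSVD W U d V) :
    IsProx (fun S => lam * nnorm S) W (U * diagonal (fun i => max (d i - lam) 0) * Vᵀ) := by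
  obtain ⟨hU, hV, hd, rfl⟩ := h
  set c : Fin r → ℝ := fun i => max (d i - lam) 0
  set g : Fin r → ℝ := fun i => min (d i) lam
  have hsub : U * diagonal d * Vᵀ - U * diagonal c * Vᵀ = U * diagonal g * Vᵀ := by
    rw [← Matrix.sub_mul, ← Matrix.mul_sub, diagonal_sub]
    congr 3
    funext i
    simp only [c, g]
    rcases le_total (d i) lam with hi | hi
    · rw [max_eq_right (by linarith), min_eq_left hi, sub_zero]
    · rw [max_eq_left (by linarith), min_eq_right hi, sub_sub_cancel]
  -- Complementary slackness: `g i = λ` wherever `c i ≠ 0`.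
  have hslack : ∑ i, g i * c i = lam * ∑ i, c i := by
    rw [mul_sum]
    refine sum_congr rfl fun i _ => ?_
    rcases le_total (d i) lam with hi | hi
    · simp only [c, max_eq_right (sub_nonpos.mpr hi), mul_zero]
    · simp only [g, min_eq_right hi]
  have hc : 0 ≤ c := fun i => le_max_right _ _
  refine IsProx.of_subgradient fun Y => ?_
  rw [hsub, minner_sub_right, minner_mul_diagonal_mul_transpose_same hU hV,
    nnorm_mul_diagonal_mul_transpose hU hV hc, hslack]
  have := minner_le_mul_nnorm hU hV hlam.le (fun i => le_min (hd i).le hlam.le)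
    (fun i => min_le_right _ _) Y
  linarith

theorem exists_isProx_nnorm {lam : ℝ} (hlam : 0 < lam) (W : Matrix (Fin m) (Fin n) ℝ) :
    ∃ S, IsProx (fun S => lam * nnorm S) W S :=
  let ⟨_, _, _, _, h⟩ := exists_svd W
  ⟨_, isProx_softThreshold hlam h⟩

section Iteration

variable {Ω : Finset (Fin m × Fin n)} {X : Matrix (Fin m) (Fin n) ℝ} {lam : ℝ}

theorem frobSq_pO_add_pOc_sub (A Y : Matrix (Fin m) (Fin n) ℝ) :
    frobSq (pO Ω X + pOc Ω A - Y) = frobSq (pO Ω Y - pO Ω X) + frobSq (pOc Ω (A - Y)) := by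
  simp only [frobSq, ← sum_add_distrib]
  refine sum_congr rfl fun i _ => sum_congr rfl fun j _ => ?_
  by_cases h : (i, j) ∈ Ω
  · simp [pOc, pO, h, sub_sq_comm]
  · simp [pOc, pO, h]

theorem norm_pOc_le (A : Matrix (Fin m) (Fin n) ℝ) : ‖pOc Ω A‖ ≤ ‖A‖ := by
  rw [norm_eq_sqrt_frobSq, norm_eq_sqrt_frobSq]
  refine Real.sqrt_le_sqrt (sum_le_sum fun i _ => sum_le_sum fun j _ => ?_)
  by_cases h : (i, j) ∈ Ω <;> simp [pOc, pO, h, sq_nonneg]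

theorem lipschitzWith_pO_add_pOc : LipschitzWith 1 fun A => pO Ω X + pOc Ω A := by
  refine LipschitzWith.of_dist_le_mul fun A B => ?_
  have hsub : pOc Ω A - pOc Ω B = pOc Ω (A - B) := by
    ext i j
    by_cases h : (i, j) ∈ Ω <;> simp [pOc, pO, h]
  rw [dist_eq_norm, dist_eq_norm, add_sub_add_left_eq_sub, hsub, NNReal.coe_one, one_mul]
  exact norm_pOc_le _

theorem qObj_eq_fObj_add (Y A : Matrix (Fin m) (Fin n) ℝ) :
    qObj Ω X lam Y A = fObj Ω X lam Y + ‖pOc Ω (A - Y)‖ ^ 2 / 2 := by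
  rw [qObj, fObj, frobSq_pO_add_pOc_sub, frobSq_eq_norm_sq (pOc Ω _)]
  ring

theorem qObj_self (A : Matrix (Fin m) (Fin n) ℝ) : qObj Ω X lam A A = fObj Ω X lam A := by
  have hzero : pOc Ω (A - A) = 0 := by
    ext i j
    simp [pOc, pO]
  rw [qObj_eq_fObj_add, hzero, norm_zero]
  ring

theorem mul_norm_le_fObj (hlam : 0 ≤ lam) (A : Matrix (Fin m) (Fin n) ℝ) :
    lam * ‖A‖ ≤ fObj Ω X lam A := by
  rw [fObj, frobSq_eq_norm_sq]
  nlinarith [norm_le_nnorm A, sq_nonneg ‖pO Ω A - pO Ω X‖]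

theorem IsProx.qObj_add_le {A S : Matrix (Fin m) (Fin n) ℝ}
    (h : IsProx (fun S => lam * nnorm S) (pO Ω X + pOc Ω A) S) (Y : Matrix (Fin m) (Fin n) ℝ) :
    qObj Ω X lam S A + ‖Y - S‖ ^ 2 / 2 ≤ qObj Ω X lam Y A := by
  simp only [qObj, frobSq_eq_norm_sq]
  linarith [h Y]

theorem IsProx.fObj_add_le {A S : Matrix (Fin m) (Fin n) ℝ}
    (h : IsProx (fun S => lam * nnorm S) (pO Ω X + pOc Ω A) S) :
    fObj Ω X lam S + ‖A - S‖ ^ 2 / 2 ≤ fObj Ω X lam A := by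
  have := h.qObj_add_le A
  rw [qObj_self, qObj_eq_fObj_add] at this
  linarith [sq_nonneg ‖pOc Ω (A - S)‖]

theorem IsProx.fObj_le {A : Matrix (Fin m) (Fin n) ℝ}
    (h : IsProx (fun S => lam * nnorm S) (pO Ω X + pOc Ω A) A) (Y : Matrix (Fin m) (Fin n) ℝ) :
    fObj Ω X lam A ≤ fObj Ω X lam Y := by
  have := h.qObj_add_le Y
  rw [qObj_self, qObj_eq_fObj_add] at this
  have hpOc := pow_le_pow_left₀ (norm_nonneg _) (norm_pOc_le (Ω := Ω) (A - Y)) 2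
  have hrev : ‖A - Y‖ = ‖Y - A‖ := norm_sub_rev _ _
  rw [hrev] at hpOc
  linarith

theorem exists_tendsto_of_isProx_succ (hlam : 0 < lam) {Z : ℕ → Matrix (Fin m) (Fin n) ℝ}
    (hZ : ∀ k, IsProx (fun S => lam * nnorm S) (pO Ω X + pOc Ω (Z k)) (Z (k + 1))) :
    ∃ a, IsProx (fun S => lam * nnorm S) (pO Ω X + pOc Ω a) a ∧ Tendsto Z atTop (𝓝 a) := by
  set T := prox (fun S => lam * nnorm S) ∘ fun A => pO Ω X + pOc Ω A
  have hT : LipschitzWith 1 T := by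
    have := (lipschitzWith_prox (exists_isProx_nnorm hlam)).comp
      (lipschitzWith_pO_add_pOc (Ω := Ω) (X := X))
    rwa [mul_one] at this
  have hstep : ∀ k, Z (k + 1) = T (Z k) := fun k => (hZ k).prox_eq.symm
  have hdesc : ∀ k, fObj Ω X lam (Z (k + 1)) + dist (Z k) (Z (k + 1)) ^ 2 / 2 ≤
      fObj Ω X lam (Z k) := fun k => by rw [dist_eq_norm]; exact (hZ k).fObj_add_le
  have hf : ∀ k, 0 ≤ fObj Ω X lam (Z k) := fun k =>
    (mul_nonneg hlam.le (norm_nonneg _)).trans (mul_norm_le_fObj hlam.le _)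
  have hanti : Antitone fun k => fObj Ω X lam (Z k) :=
    antitone_nat_of_succ_le fun k => by linarith [hdesc k, sq_nonneg (dist (Z k) (Z (k + 1)))]
  have hbdd : Bornology.IsBounded (Set.range Z) := by
    refine isBounded_iff_forall_norm_le.mpr ⟨fObj Ω X lam (Z 0) / lam, ?_⟩
    rintro _ ⟨k, rfl⟩
    rw [le_div_iff₀' hlam]
    exact (mul_norm_le_fObj hlam.le _).trans (hanti k.zero_le)
  obtain ⟨a, hfix, hlim⟩ := hT.exists_isFixedPt_tendsto hstep hbdd
    (tendsto_dist_succ_of_descent hf hdesc)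
  have ha := isProx_prox (exists_isProx_nnorm hlam (pO Ω X + pOc Ω a))
  rw [show prox _ _ = a from hfix.eq] at ha
  exact ⟨a, ha, hlim⟩

end Iteration

end SoftImpute

open SoftImpute

theorem soft_impute_converges_general {m n : ℕ} (Ω : Finset (Fin m × Fin n))
    (X : Matrix (Fin m) (Fin n) ℝ) (lam : ℝ) (hlam : 0 < lam)
    (Z : ℕ → Matrix (Fin m) (Fin n) ℝ)
    (hiter : ∀ k, ∃ (r : ℕ) (U : Matrix (Fin m) (Fin r) ℝ) (d : Fin r → ℝ)
        (V : Matrix (Fin n) (Fin r) ℝ),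
      IsSVD (pO Ω X + pOc Ω (Z k)) U d V ∧
      Z (k + 1) = U * Matrix.diagonal (fun i => max (d i - lam) 0) * Vᵀ) :
    ∃ Zinf : Matrix (Fin m) (Fin n) ℝ,
      Filter.Tendsto Z Filter.atTop (nhds Zinf) ∧
      ∀ Y : Matrix (Fin m) (Fin n) ℝ, fObj Ω X lam Zinf ≤ fObj Ω X lam Y := by
  have hZ : ∀ k, IsProx (fun S => lam * nnorm S) (pO Ω X + pOc Ω (Z k)) (Z (k + 1)) := fun k => by
    obtain ⟨r, U, d, V, hsvd, hZk⟩ := hiter k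
    exact hZk ▸ isProx_softThreshold hlam hsvd
  obtain ⟨Zinf, hfix, hlim⟩ := exists_tendsto_of_isProx_succ hlam hZ
  exact ⟨Zinf, hlim, hfix.fObj_le⟩

/-- convergence of Soft-Impute: the iterates converge to a
minimizer of `f_λ`. -/
theorem soft_impute_converges {m n : ℕ} (Ω : Finset (Fin m × Fin n))
    (X : Matrix (Fin m) (Fin n) ℝ) (lam : ℝ) (hlam : 0 < lam)
    (Z : ℕ → Matrix (Fin m) (Fin n) ℝ) (h0 : Z 0 = 0)
    (hiter : ∀ k, ∃ (r : ℕ) (U : Matrix (Fin m) (Fin r) ℝ) (d : Fin r → ℝ)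
        (V : Matrix (Fin n) (Fin r) ℝ),
      IsSVD (pO Ω X + pOc Ω (Z k)) U d V ∧
      Z (k + 1) = U * Matrix.diagonal (fun i => max (d i - lam) 0) * Vᵀ) :
    ∃ Zinf : Matrix (Fin m) (Fin n) ℝ,
      Filter.Tendsto Z Filter.atTop (nhds Zinf) ∧
      ∀ Y : Matrix (Fin m) (Fin n) ℝ, fObj Ω X lam Zinf ≤ fObj Ω X lam Y :=
  soft_impute_converges_general Ω X lam hlam Z hiter
end
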